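/- If (Z_U, Z_V) ~ BC₊(ψ), then for every positive integer n, (Z_U^n, Z_V^n) ~ BC₊(ψ^n). Consequently, as n → ∞ the distribution of (Z_U^n, Z_V^n) converges weakly to the uniform distribution on the torus Ω × Ω. -/

import Mathlib

open MeasureTheory Real

/-- Arc-length measure on the unit circle `Ω = {z : ℂ | |z| = 1}`, obtained as the
image of Lebesgue measure on `(0, 2π]` under `θ ↦ exp(iθ)`; it has total mass `2π`. -/
noncomputable def circleMeasure : Measure ℂ :=
  Measure.map (fun θ : ℝ => Complex.exp (θ * Complex.I))
    (volume.restrict (Set.Ioc 0 (2 * Real.pi)))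

/-- The density of the `BC₊(ψ)` model on `Ω × Ω`:
`c(z_u, z_v) = (1/(4π²)) (1-|ψ|²)/|1 - ψ z_v conj z_u|²`. -/
noncomputable def bcDensity (ψ : ℂ) (p : ℂ × ℂ) : ℝ :=
  (1 / (4 * Real.pi ^ 2)) * (1 - ‖ψ‖ ^ 2)
    / ‖1 - ψ * p.2 * (starRingEnd ℂ) p.1‖ ^ 2

/-- The `BC₊(ψ)` distribution on the torus `Ω × Ω`. -/
noncomputable def BCplus (ψ : ℂ) : Measure (ℂ × ℂ) :=
  (circleMeasure.prod circleMeasure).withDensity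
    (fun p => ENNReal.ofReal (bcDensity ψ p))

open ComplexConjugate ENNReal Filter Finset Set Topology

/-!
Arc length is invariant under rotations, so `BC₊(ψ)` is the image of `circleMeasure ⊗ ν_ψ` under
the shear `(u, w) ↦ (u, u w)`, where `ν_ψ` has density `bcDensity ψ (1, ·)`, a multiple of the
Poisson kernel `Re ((1 + ψ w) / (1 - ψ w))`. Powers commute with the shear and `z ↦ z ^ n`
preserves arc length, while pushing `ν_ψ` forward along `z ↦ z ^ n` averages its density over
the `n` preimages of each point. Summing over the `n`-th roots of unity `ζ`,
`∑ (1 + a ζ) / (1 - a ζ) = n (1 + a ^ n) / (1 - a ^ n)`, so the average is the density of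
`ν_{ψ ^ n}`. Weak convergence follows by dominated convergence: `ψ ^ n → 0`, and for `n ≥ 1` the
densities are bounded on the torus by a constant depending only on `‖ψ‖`.
-/

namespace IsPrimitiveRoot

variable {K : Type*} [Field K] {ζ : K} {n : ℕ}

theorem geom_sum_pow_eq_zero (hζ : IsPrimitiveRoot ζ n) {i : ℕ} (hi₀ : i ≠ 0) (hin : i < n) :
    ∑ k ∈ range n, (ζ ^ i) ^ k = 0 := by
  rw [geom_sum_eq (hζ.pow_ne_one_of_pos_of_lt hi₀ hin), ← pow_mul, mul_comm, pow_mul,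
    hζ.pow_eq_one, one_pow, sub_self, zero_div]

theorem mul_pow_pow (hζ : IsPrimitiveRoot ζ n) (a : K) (k : ℕ) : (a * ζ ^ k) ^ n = a ^ n := by
  rw [mul_pow, ← pow_mul, mul_comm k, pow_mul, hζ.pow_eq_one, one_pow, mul_one]

theorem one_sub_mul_pow_ne_zero (hζ : IsPrimitiveRoot ζ n) {a : K} (ha : a ^ n ≠ 1) (k : ℕ) :
    1 - a * ζ ^ k ≠ 0 := fun h ↦
  ha (by rw [← hζ.mul_pow_pow a k, ← sub_eq_zero.mp h, one_pow])

theorem sum_inv_one_sub_mul_pow (hζ : IsPrimitiveRoot ζ n) {a : K} (ha : a ^ n ≠ 1) :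
    ∑ k ∈ range n, (1 - a * ζ ^ k)⁻¹ = n / (1 - a ^ n) := by
  have hn : n ≠ 0 := by rintro rfl; exact ha (pow_zero a)
  have h_geom (k : ℕ) :
      (1 - a ^ n) * (1 - a * ζ ^ k)⁻¹ = ∑ i ∈ range n, a ^ i * (ζ ^ i) ^ k := by
    rw [← hζ.mul_pow_pow a k, ← mul_neg_geom_sum, mul_comm,
      inv_mul_cancel_left₀ (hζ.one_sub_mul_pow_ne_zero ha k)]
    exact sum_congr rfl fun i _ ↦ by ring
  rw [eq_div_iff (sub_ne_zero.mpr ha.symm), mul_comm, mul_sum, sum_congr rfl fun k _ ↦ h_geom k,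
    sum_comm]
  simp_rw [← mul_sum]
  rw [sum_eq_single_of_mem 0 (mem_range.mpr (Nat.pos_of_ne_zero hn))
    fun i hi hi₀ ↦ by rw [hζ.geom_sum_pow_eq_zero hi₀ (mem_range.mp hi), mul_zero]]
  simp

theorem sum_one_add_div_one_sub_mul_pow (hζ : IsPrimitiveRoot ζ n) {a : K} (ha : a ^ n ≠ 1) :
    ∑ k ∈ range n, (1 + a * ζ ^ k) / (1 - a * ζ ^ k) = n * ((1 + a ^ n) / (1 - a ^ n)) := by
  have h_split {z : K} (hz : 1 - z ≠ 0) : (1 + z) / (1 - z) = 2 * (1 - z)⁻¹ - 1 := by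
    field_simp; ring
  rw [sum_congr rfl fun k _ ↦ h_split (hζ.one_sub_mul_pow_ne_zero ha k),
    h_split (sub_ne_zero.mpr ha.symm), sum_sub_distrib, ← mul_sum,
    hζ.sum_inv_one_sub_mul_pow ha, div_eq_mul_inv]
  simp only [sum_const, card_range, nsmul_eq_mul, mul_one]
  ring

end IsPrimitiveRoot

theorem setLIntegral_Ioc_comp_add_right (G : ℝ → ℝ≥0∞) (a b c : ℝ) :
    ∫⁻ x in Ioc b c, G (x + a) = ∫⁻ y in Ioc (b + a) (c + a), G y := by
  rw [(measurePreserving_add_right volume a).setLIntegral_comp_emb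
    (measurableEmbedding_addRight a), image_add_const_Ioc]

theorem setLIntegral_Ioc_comp_mul_left (G : ℝ → ℝ≥0∞) {c : ℝ} (hc : 0 < c) (a b : ℝ) :
    ∫⁻ x in Ioc a b, G (c * x) = ENNReal.ofReal c⁻¹ * ∫⁻ y in Ioc (c * a) (c * b), G y := by
  have h : MeasurableEmbedding (c * ·) := (Homeomorph.mulLeft₀ c hc.ne').measurableEmbedding
  rw [(MeasurePreserving.mk h.measurable rfl).setLIntegral_comp_emb h,
    Real.map_volume_mul_left hc.ne', Measure.restrict_smul, lintegral_smul_measure,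
    abs_of_pos (inv_pos.mpr hc), Set.image_mul_left_Ioc hc, smul_eq_mul]

theorem setLIntegral_Ioc_natCast_mul_eq_sum (G : ℝ → ℝ≥0∞) {T : ℝ} (hT : 0 ≤ T) (n : ℕ) :
    ∫⁻ y in Ioc 0 (n * T), G y = ∑ k ∈ range n, ∫⁻ x in Ioc 0 T, G (x + k * T) := by
  induction n with
  | zero => simp
  | succ n ih =>
    rw [sum_range_succ, ← ih, setLIntegral_Ioc_comp_add_right, zero_add, Nat.cast_succ, add_one_mul,
      add_comm T, ← lintegral_union measurableSet_Ioc (Ioc_disjoint_Ioc_of_le le_rfl),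
      Set.Ioc_union_Ioc_eq_Ioc (by positivity) (by linarith)]

theorem Function.Periodic.setLIntegral_Ioc_comp_add_right {G : ℝ → ℝ≥0∞} {T : ℝ}
    (hG : Function.Periodic G T) (hT : 0 < T) (a : ℝ) :
    ∫⁻ x in Ioc 0 T, G (x + a) = ∫⁻ x in Ioc 0 T, G x := by
  rw [_root_.setLIntegral_Ioc_comp_add_right, zero_add, add_comm T]
  refine (isAddFundamentalDomain_Ioc hT a).setLIntegral_eq
    (by simpa using isAddFundamentalDomain_Ioc hT 0) G ?_
  rintro ⟨_, k, rfl⟩ x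
  simpa [add_comm] using hG.zsmul k x

theorem Function.Periodic.setLIntegral_comp_natCast_mul_mul {F h : ℝ → ℝ≥0∞} {T : ℝ}
    (hF : Function.Periodic F T) (hT : 0 < T) (hFm : Measurable F) (hh : Measurable h)
    {n : ℕ} (hn : n ≠ 0) :
    ∫⁻ θ in Ioc 0 T, F (n * θ) * h θ
      = ∫⁻ x in Ioc 0 T, F x * ((n : ℝ≥0∞)⁻¹ * ∑ k ∈ range n, h ((x + k * T) / n)) := by
  have hn' : (0 : ℝ) < n := Nat.cast_pos.mpr (Nat.pos_of_ne_zero hn)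
  have hmeas (k : ℕ) : Measurable fun x ↦ F x * h ((x + k * T) / n) := by fun_prop
  calc ∫⁻ θ in Ioc 0 T, F (n * θ) * h θ
      = ∫⁻ θ in Ioc 0 T, (fun y ↦ F y * h (y / n)) (n * θ) := by
        simp only [mul_div_cancel_left₀ _ hn'.ne']
    _ = (n : ℝ≥0∞)⁻¹ * ∑ k ∈ range n, ∫⁻ x in Ioc 0 T, F (x + k * T) * h ((x + k * T) / n) := by
        rw [setLIntegral_Ioc_comp_mul_left (fun y ↦ F y * h (y / n)) hn', mul_zero,
          setLIntegral_Ioc_natCast_mul_eq_sum _ hT.le, ofReal_inv_of_pos hn', ofReal_natCast]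
    _ = ∫⁻ x in Ioc 0 T, F x * ((n : ℝ≥0∞)⁻¹ * ∑ k ∈ range n, h ((x + k * T) / n)) := by
        simp_rw [(hF.nat_mul _) _]
        rw [← lintegral_finsetSum _ fun k _ ↦ hmeas k, ← lintegral_const_mul _ (by fun_prop)]
        simp_rw [mul_sum, mul_left_comm (F _)]

theorem measurable_circleExp : Measurable fun θ : ℝ ↦ (Circle.exp θ : ℂ) :=
  (Circle.exp.continuous.subtype_val).measurable

theorem circleMeasure_eq :
    circleMeasure =
      Measure.map (fun θ : ℝ ↦ (Circle.exp θ : ℂ)) (volume.restrict (Ioc 0 (2 * π))) :=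
  rfl

theorem lintegral_circleMeasure {F : ℂ → ℝ≥0∞} (hF : Measurable F) :
    ∫⁻ z, F z ∂circleMeasure = ∫⁻ θ in Ioc 0 (2 * π), F (Circle.exp θ) :=
  lintegral_map hF measurable_circleExp

theorem ae_circleMeasure_norm_eq_one : ∀ᵐ z ∂circleMeasure, ‖z‖ = 1 :=
  (ae_map_iff measurable_circleExp.aemeasurable
    (measurableSet_eq_fun measurable_norm measurable_const)).mpr
    (ae_of_all _ fun _ ↦ Circle.norm_coe _)

theorem circleMeasure_univ : circleMeasure univ = ENNReal.ofReal (2 * π) := by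
  rw [circleMeasure_eq, Measure.map_apply measurable_circleExp MeasurableSet.univ, preimage_univ,
    Measure.restrict_apply_univ, Real.volume_Ioc, sub_zero]

instance : IsFiniteMeasure circleMeasure := ⟨by rw [circleMeasure_univ]; exact ofReal_lt_top⟩

theorem periodic_comp_circleExp (F : ℂ → ℝ≥0∞) :
    Function.Periodic (fun θ ↦ F (Circle.exp θ)) (2 * π) := fun θ ↦ by
  simp only [Circle.periodic_exp θ]

theorem map_mul_left_circleMeasure {u : ℂ} (hu : ‖u‖ = 1) :
    Measure.map (u * ·) circleMeasure = circleMeasure := by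
  obtain ⟨t, rfl⟩ := (Complex.norm_eq_one_iff u).mp hu
  refine Measure.ext_of_lintegral _ fun F hF ↦ ?_
  rw [lintegral_map hF (measurable_const_mul _), lintegral_circleMeasure (by fun_prop),
    lintegral_circleMeasure hF]
  simpa [← Circle.coe_exp, ← Circle.coe_mul, ← Circle.exp_add, add_comm t]
    using (periodic_comp_circleExp F).setLIntegral_Ioc_comp_add_right two_pi_pos t

theorem map_pow_circleMeasure_withDensity {n : ℕ} (hn : n ≠ 0) {h h' : ℂ → ℝ≥0∞}
    (hh : Measurable h) (hh' : Measurable h')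
    (havg : ∀ x : ℝ, (n : ℝ≥0∞)⁻¹ * ∑ k ∈ range n, h (Circle.exp ((x + k * (2 * π)) / n))
      = h' (Circle.exp x)) :
    Measure.map (· ^ n) (circleMeasure.withDensity h) = circleMeasure.withDensity h' := by
  refine Measure.ext_of_lintegral _ fun F hF ↦ ?_
  rw [lintegral_map hF (by fun_prop), lintegral_withDensity_eq_lintegral_mul _ hh (by fun_prop),
    lintegral_withDensity_eq_lintegral_mul _ hh' hF, lintegral_circleMeasure (by fun_prop),
    lintegral_circleMeasure (by fun_prop)]
  have hpow (θ : ℝ) : (Circle.exp θ : ℂ) ^ n = Circle.exp (n * θ) := by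
    rw [Circle.exp_natCast_mul, Circle.coe_pow]
  simp only [Pi.mul_apply, hpow, mul_comm (h _)]
  refine ((periodic_comp_circleExp F).setLIntegral_comp_natCast_mul_mul two_pi_pos
    (by fun_prop) (hh.comp measurable_circleExp) hn).trans ?_
  simp only [Function.comp_apply, havg, mul_comm (F _)]

theorem map_pow_circleMeasure {n : ℕ} (hn : n ≠ 0) :
    Measure.map (· ^ n) circleMeasure = circleMeasure := by
  simpa using map_pow_circleMeasure_withDensity hn measurable_one measurable_one fun _ ↦ by
    simp [ENNReal.inv_mul_cancel (Nat.cast_ne_zero.mpr hn) (natCast_ne_top n)]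

theorem circleMeasure_prod_withDensity_eq_map {g : ℂ → ℝ≥0∞} (hg : Measurable g) :
    (circleMeasure.prod circleMeasure).withDensity (fun p ↦ g (p.2 * conj p.1))
      = Measure.map (fun p : ℂ × ℂ ↦ (p.1, p.1 * p.2))
          (circleMeasure.prod (circleMeasure.withDensity g)) := by
  refine Measure.ext_of_lintegral _ fun F hF ↦ ?_
  rw [lintegral_withDensity_eq_lintegral_mul _ (by fun_prop) hF, lintegral_map hF (by fun_prop),
    lintegral_prod _ (by fun_prop), lintegral_prod _ (by fun_prop)]
  refine lintegral_congr_ae ?_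
  filter_upwards [ae_circleMeasure_norm_eq_one] with u hu
  have hu' (w : ℂ) : u * w * conj u = w := by
    rw [mul_right_comm, Complex.mul_conj, Complex.normSq_eq_norm_sq, hu]; simp
  conv_lhs => rw [← map_mul_left_circleMeasure hu]
  rw [lintegral_map (by fun_prop) (by fun_prop),
    lintegral_withDensity_eq_lintegral_mul _ hg (by fun_prop)]
  simp only [Pi.mul_apply, hu']

theorem bcDensity_eq_one (ψ : ℂ) (p : ℂ × ℂ) :
    bcDensity ψ p = bcDensity ψ (1, p.2 * conj p.1) := by
  simp [bcDensity, mul_assoc]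

theorem bcDensity_one_eq_re (ψ : ℂ) {w : ℂ} (hw : ‖w‖ = 1) :
    bcDensity ψ (1, w) = 1 / (4 * π ^ 2) * ((1 + ψ * w) / (1 - ψ * w)).re := by
  have hP := congrFun (poissonKernel_eq_re_herglotzRieszKernel (c := 0) (w := ψ * w)) 1
  simp only [poissonKernel, herglotzRieszKernel, Function.comp_apply, sub_zero, norm_one,
    one_pow, norm_mul, hw, mul_one] at hP
  rw [bcDensity, map_one, mul_one, mul_div_assoc, hP]

theorem sum_bcDensity_one_circleExp {ψ : ℂ} (hψ : ‖ψ‖ < 1) {n : ℕ} (hn : n ≠ 0) (x : ℝ) :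
    ∑ k ∈ range n, bcDensity ψ (1, Circle.exp ((x + k * (2 * π)) / n))
      = n * bcDensity (ψ ^ n) (1, Circle.exp x) := by
  set ζ := Complex.exp (2 * π * Complex.I / n)
  have hζ : IsPrimitiveRoot ζ n := Complex.isPrimitiveRoot_exp n hn
  set a := ψ * Circle.exp (x / n)
  have hroot (k : ℕ) : ψ * Circle.exp ((x + k * (2 * π)) / n) = a * ζ ^ k := by
    rw [add_div, Circle.exp_add, Circle.coe_mul, mul_assoc, mul_div_assoc, Circle.exp_natCast_mul,
      Circle.coe_pow, Circle.coe_exp]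
    simp only [ζ]
    push_cast
    ring_nf
  have ha : a ^ n = ψ ^ n * Circle.exp x := by
    rw [mul_pow, ← Circle.coe_pow, ← Circle.exp_natCast_mul,
      mul_div_cancel₀ _ (Nat.cast_ne_zero.mpr hn)]
  have ha_ne : a ^ n ≠ 1 := fun h ↦ by
    have := congrArg norm h
    rw [ha, norm_mul, Circle.norm_coe, mul_one, norm_one, norm_pow] at this
    exact (pow_lt_one₀ (norm_nonneg ψ) hψ hn).ne this
  simp only [bcDensity_one_eq_re _ (Circle.norm_coe _), hroot, ← mul_sum,
    ← Complex.re_sum, ← ha]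
  rw [hζ.sum_one_add_div_one_sub_mul_pow ha_ne, ← Complex.ofReal_natCast, Complex.re_ofReal_mul]
  ring

@[fun_prop]
theorem measurable_bcDensity (ψ : ℂ) : Measurable (bcDensity ψ) := by
  unfold bcDensity; fun_prop

theorem bcDensity_nonneg {ψ : ℂ} (hψ : ‖ψ‖ ≤ 1) (p : ℂ × ℂ) : 0 ≤ bcDensity ψ p := by
  have : 0 ≤ 1 - ‖ψ‖ ^ 2 := sub_nonneg.mpr (pow_le_one₀ (norm_nonneg ψ) hψ)
  unfold bcDensity; positivity

theorem one_sub_norm_le_norm_one_sub_mul (ψ : ℂ) {w : ℂ} (hw : ‖w‖ = 1) :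
    1 - ‖ψ‖ ≤ ‖1 - ψ * w‖ := by
  simpa [hw] using norm_sub_norm_le (1 : ℂ) (ψ * w)

theorem bcDensity_one_pos {ψ : ℂ} (hψ : ‖ψ‖ < 1) {w : ℂ} (hw : ‖w‖ = 1) :
    0 < bcDensity ψ (1, w) := by
  have hnum : 0 < 1 - ‖ψ‖ ^ 2 := sub_pos.mpr (pow_lt_one₀ (norm_nonneg ψ) hψ two_ne_zero)
  have hden : 0 < ‖1 - ψ * w‖ := (sub_pos.mpr hψ).trans_le (one_sub_norm_le_norm_one_sub_mul ψ hw)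
  simp only [bcDensity, map_one, mul_one]
  positivity

theorem bcDensity_one_le {ψ : ℂ} {r : ℝ} (hψ : ‖ψ‖ ≤ r) (hr : r < 1) {w : ℂ} (hw : ‖w‖ = 1) :
    bcDensity ψ (1, w) ≤ 1 / (4 * π ^ 2) / (1 - r) ^ 2 := by
  have hden : 1 - r ≤ ‖1 - ψ * w‖ :=
    (sub_le_sub_left hψ 1).trans (one_sub_norm_le_norm_one_sub_mul ψ hw)
  simp only [bcDensity, map_one, mul_one]
  gcongr
  exact mul_le_of_le_one_right (by positivity) (sub_le_self _ (by positivity))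

theorem ae_circleMeasure_prod_norm_eq_one :
    ∀ᵐ p ∂circleMeasure.prod circleMeasure, ‖p.2 * conj p.1‖ = 1 := by
  filter_upwards [Measure.quasiMeasurePreserving_fst.ae ae_circleMeasure_norm_eq_one,
    Measure.quasiMeasurePreserving_snd.ae ae_circleMeasure_norm_eq_one] with p h₁ h₂
  simp [h₁, h₂]

theorem BCplus_eq_map (ψ : ℂ) :
    BCplus ψ = Measure.map (fun p : ℂ × ℂ ↦ (p.1, p.1 * p.2))
      (circleMeasure.prod
        (circleMeasure.withDensity fun w ↦ ENNReal.ofReal (bcDensity ψ (1, w)))) := by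
  rw [BCplus, ← circleMeasure_prod_withDensity_eq_map (by fun_prop)]
  simp only [← bcDensity_eq_one]

theorem map_pow_circleMeasure_withDensity_bcDensity {ψ : ℂ} (hψ : ‖ψ‖ < 1) {n : ℕ} (hn : n ≠ 0) :
    Measure.map (· ^ n) (circleMeasure.withDensity fun w ↦ ENNReal.ofReal (bcDensity ψ (1, w)))
      = circleMeasure.withDensity fun w ↦ ENNReal.ofReal (bcDensity (ψ ^ n) (1, w)) := by
  refine map_pow_circleMeasure_withDensity hn (by fun_prop) (by fun_prop) fun x ↦ ?_
  rw [← ofReal_sum_of_nonneg fun k _ ↦ bcDensity_nonneg hψ.le _, sum_bcDensity_one_circleExp hψ hn,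
    ofReal_mul n.cast_nonneg, ofReal_natCast, ← mul_assoc,
    ENNReal.inv_mul_cancel (Nat.cast_ne_zero.mpr hn) (natCast_ne_top n), one_mul]

theorem map_pow_BCplus {ψ : ℂ} (hψ : ‖ψ‖ < 1) {n : ℕ} (hn : n ≠ 0) :
    Measure.map (fun p : ℂ × ℂ ↦ (p.1 ^ n, p.2 ^ n)) (BCplus ψ) = BCplus (ψ ^ n) := by
  have hcomm : (fun p : ℂ × ℂ ↦ (p.1 ^ n, p.2 ^ n)) ∘ (fun p ↦ (p.1, p.1 * p.2))
      = (fun p ↦ (p.1, p.1 * p.2)) ∘ Prod.map (· ^ n) (· ^ n) := by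
    ext p <;> simp [mul_pow]
  rw [BCplus_eq_map, Measure.map_map (by fun_prop) (by fun_prop), hcomm,
    ← Measure.map_map (by fun_prop) (by fun_prop),
    ← Measure.map_prod_map _ _ (by fun_prop) (by fun_prop),
    map_pow_circleMeasure hn, map_pow_circleMeasure_withDensity_bcDensity hψ hn, BCplus_eq_map]

theorem BCplus_ne_zero {ψ : ℂ} (hψ : ‖ψ‖ < 1) : BCplus ψ ≠ 0 := by
  have h_ne : circleMeasure.prod circleMeasure ≠ 0 := by
    rw [← Measure.measure_univ_ne_zero, ← univ_prod_univ, Measure.prod_prod, circleMeasure_univ]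
    positivity
  rw [BCplus, Ne, withDensity_eq_zero_iff (by fun_prop)]
  refine fun h_zero ↦ h_ne (ae_eq_bot.mp (eventually_false_iff_eq_bot.mp ?_))
  filter_upwards [h_zero, ae_circleMeasure_prod_norm_eq_one] with p hp h_norm
  have := bcDensity_one_pos hψ h_norm
  rw [← bcDensity_eq_one] at this
  simp only [Pi.zero_apply, ofReal_eq_zero] at hp
  linarith

theorem integral_BCplus {ζ : ℂ} (hζ : ‖ζ‖ ≤ 1) (f : ℂ × ℂ → ℝ) :
    ∫ p, f p ∂BCplus ζ = ∫ p, bcDensity ζ p * f p ∂circleMeasure.prod circleMeasure := by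
  rw [BCplus, integral_withDensity_eq_integral_toReal_smul (by fun_prop)
    (ae_of_all _ fun _ ↦ ofReal_lt_top)]
  simp only [toReal_ofReal (bcDensity_nonneg hζ _), smul_eq_mul]

theorem tendsto_integral_BCplus_pow {ψ : ℂ} (hψ : ‖ψ‖ < 1)
    (f : BoundedContinuousFunction (ℂ × ℂ) ℝ) :
    Tendsto (fun n : ℕ ↦ ∫ p, f p ∂BCplus (ψ ^ n)) atTop (𝓝 (∫ p, f p ∂BCplus 0)) := by
  have h_le (n : ℕ) : ‖ψ ^ n‖ ≤ 1 := by
    rw [norm_pow]; exact pow_le_one₀ (norm_nonneg ψ) hψ.le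
  simp only [integral_BCplus (h_le _), integral_BCplus (norm_zero.trans_le zero_le_one)]
  refine tendsto_integral_filter_of_dominated_convergence
    (fun _ ↦ 1 / (4 * π ^ 2) / (1 - ‖ψ‖) ^ 2 * ‖f‖)
    (Eventually.of_forall fun n ↦ by fun_prop) ?_ (integrable_const _) (ae_of_all _ fun p ↦ ?_)
  · filter_upwards [eventually_ge_atTop 1] with n hn
    filter_upwards [ae_circleMeasure_prod_norm_eq_one] with p hp
    have h_pow : ‖ψ ^ n‖ ≤ ‖ψ‖ := by
      rw [norm_pow]; exact pow_le_of_le_one (norm_nonneg ψ) hψ.le (by omega)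
    rw [norm_mul, Real.norm_of_nonneg (bcDensity_nonneg (h_le n) p), bcDensity_eq_one]
    exact mul_le_mul (bcDensity_one_le h_pow hψ hp) (f.norm_coe_le_norm _) (norm_nonneg _)
      (by positivity)
  · have h_cont : ContinuousAt (fun ζ ↦ bcDensity ζ p) 0 := by
      unfold bcDensity
      exact ContinuousAt.div (by fun_prop) (by fun_prop) (by simp)
    exact ((h_cont.tendsto.comp (tendsto_pow_atTop_nhds_zero_of_norm_lt_one hψ)).mul_const (f p))

theorem bcplus_powers_general {α : Type*} [MeasurableSpace α] (P : Measure α)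
    (ψ : ℂ) (hψ : ‖ψ‖ < 1)
    (ZU ZV : α → ℂ)
    (hlaw : Measure.map (fun ω => (ZU ω, ZV ω)) P = BCplus ψ) :
    (∀ n : ℕ, 0 < n →
      Measure.map (fun ω => (ZU ω ^ n, ZV ω ^ n)) P = BCplus (ψ ^ n)) ∧
    (∀ f : BoundedContinuousFunction (ℂ × ℂ) ℝ,
      Filter.Tendsto
        (fun n : ℕ => ∫ p, f p ∂(Measure.map (fun ω => (ZU ω ^ n, ZV ω ^ n)) P))
        Filter.atTop (nhds (∫ p, f p ∂(BCplus 0)))) := by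
  have hZ : AEMeasurable (fun ω ↦ (ZU ω, ZV ω)) P := by
    by_contra h
    exact BCplus_ne_zero hψ (by rw [← hlaw, Measure.map_of_not_aemeasurable h])
  have h_law_pow (n : ℕ) (hn : 0 < n) :
      Measure.map (fun ω ↦ (ZU ω ^ n, ZV ω ^ n)) P = BCplus (ψ ^ n) := by
    rw [← map_pow_BCplus hψ hn.ne', ← hlaw, AEMeasurable.map_map_of_aemeasurable (by fun_prop) hZ]
    rfl
  refine ⟨h_law_pow, fun f ↦ (tendsto_integral_BCplus_pow hψ f).congr' ?_⟩
  filter_upwards [eventually_ge_atTop 1] with n hn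
  rw [h_law_pow n hn]

/-- if `(Z_U, Z_V) ~ BC₊(ψ)` then `(Z_U^n, Z_V^n) ~ BC₊(ψ^n)` for every
positive integer `n`, and as `n → ∞` the law of `(Z_U^n, Z_V^n)` converges weakly to the
uniform distribution on the torus (which is `BC₊(0)`). -/
theorem bcplus_powers {α : Type*} [MeasurableSpace α] (P : Measure α)
    [IsProbabilityMeasure P] (ψ : ℂ) (hψ : ‖ψ‖ < 1)
    (ZU ZV : α → ℂ)
    (hlaw : Measure.map (fun ω => (ZU ω, ZV ω)) P = BCplus ψ) :
    (∀ n : ℕ, 0 < n →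
      Measure.map (fun ω => (ZU ω ^ n, ZV ω ^ n)) P = BCplus (ψ ^ n)) ∧
    (∀ f : BoundedContinuousFunction (ℂ × ℂ) ℝ,
      Filter.Tendsto
        (fun n : ℕ => ∫ p, f p ∂(Measure.map (fun ω => (ZU ω ^ n, ZV ω ^ n)) P))
        Filter.atTop (nhds (∫ p, f p ∂(BCplus 0)))) :=
  bcplus_powers_general P ψ hψ ZU ZV hlaw
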